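/- In the two-stage simulation model, the value ψ₁₁₀ of the first-stage main treatment effect satisfies ψ₁₁₀ = γ₃ + q₁|f₁| - q₂|f₂| + (1/2 - q₁)|f₃| - (1/2 - q₂)|f₄|, where f₁ = γ₅+γ₆+γ₇, f₂ = γ₅+γ₆-γ₇, f₃ = γ₅-γ₆+γ₇, f₄ = γ₅-γ₆-γ₇, and the treatment effect difference in expected max-Q pseudo-outcome between A₁ = 1 and A₁ = -1 equals 2ψ₁₁₀ + 2ψ₁₂₀O₁ under the specified probability model. -/
import Mathlib


/-- In the two-stage simulation model, with
m(o₁,a₁) = E[Y₁ | O₁ = o₁, A₁ = a₁]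
  = γ₁+γ₂o₁+γ₃a₁+γ₄o₁a₁ + expit(δ₁o₁+δ₂a₁)·|γ₅+γ₆+γ₇a₁|
      + (1 - expit(δ₁o₁+δ₂a₁))·|γ₅-γ₆+γ₇a₁|
(the conditional expectation of the pseudo-outcome
Y₁ = max_{a₂∈{-1,1}} E[R₂|O₁,A₁,O₂,a₂] = γ₁+γ₂O₁+γ₃A₁+γ₄O₁A₁+|γ₅+γ₆O₂+γ₇A₁|),
the coefficients ψ₁₁₀ = γ₃ + q₁|f₁| - q₂|f₂| + (1/2-q₁)|f₃| - (1/2-q₂)|f₄| and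
ψ₁₂₀ = γ₄ + q₁'|f₁| - q₂'|f₂| - q₁'|f₃| + q₂'|f₄| satisfy, for each o₁ ∈ {-1,1},
m(o₁,1) - m(o₁,-1) = 2ψ₁₁₀ + 2ψ₁₂₀·o₁. -/
theorem stmt11 (γ₁ γ₂ γ₃ γ₄ γ₅ γ₆ γ₇ δ₁ δ₂ : ℝ)
    (expit : ℝ → ℝ) (hexpit : ∀ x, expit x = Real.exp x / (1 + Real.exp x))
    (m : ℝ → ℝ → ℝ)
    (hm : ∀ o₁ a₁, m o₁ a₁ =
      γ₁ + γ₂ * o₁ + γ₃ * a₁ + γ₄ * o₁ * a₁ +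
        expit (δ₁ * o₁ + δ₂ * a₁) * |γ₅ + γ₆ + γ₇ * a₁| +
        (1 - expit (δ₁ * o₁ + δ₂ * a₁)) * |γ₅ - γ₆ + γ₇ * a₁|)
    (f₁ f₂ f₃ f₄ q₁ q₂ q₁' q₂' ψ₁₁₀ ψ₁₂₀ : ℝ)
    (hf₁ : f₁ = γ₅ + γ₆ + γ₇) (hf₂ : f₂ = γ₅ + γ₆ - γ₇)
    (hf₃ : f₃ = γ₅ - γ₆ + γ₇) (hf₄ : f₄ = γ₅ - γ₆ - γ₇)
    (hq₁ : q₁ = (expit (δ₁ + δ₂) + expit (-δ₁ + δ₂)) / 4)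
    (hq₂ : q₂ = (expit (δ₁ - δ₂) + expit (-δ₁ - δ₂)) / 4)
    (hq₁' : q₁' = (expit (δ₁ + δ₂) - expit (-δ₁ + δ₂)) / 4)
    (hq₂' : q₂' = (expit (δ₁ - δ₂) - expit (-δ₁ - δ₂)) / 4)
    (hψ₁₁₀ : ψ₁₁₀ = γ₃ + q₁ * |f₁| - q₂ * |f₂| + (1/2 - q₁) * |f₃| - (1/2 - q₂) * |f₄|)
    (hψ₁₂₀ : ψ₁₂₀ = γ₄ + q₁' * |f₁| - q₂' * |f₂| - q₁' * |f₃| + q₂' * |f₄|) :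
    ∀ o₁ ∈ ({-1, 1} : Set ℝ), m o₁ 1 - m o₁ (-1) = 2 * ψ₁₁₀ + 2 * ψ₁₂₀ * o₁ := by
  subst hψ₁₁₀ hψ₁₂₀ hq₁ hq₂ hq₁' hq₂' hf₁ hf₂ hf₃ hf₄
  rintro o₁ (rfl | rfl) <;>
  · rw [hm, hm]
    norm_num
    ring_nf
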